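/- For t ≥ 3, ex_3(n, H_t S_2) ≤ (t + o(1))·n²/6, where S_2 is the path with two edges (cherry): any 3-uniform hypergraph on n vertices with no t-heavy copy of S_2 has at most (t/6 + o(1))·n² hyperedges. -/

import Mathlib

open Finset

/-- `H` contains a `t`-heavy copy of the graph `F`: an injective placement of `V(F)`
such that every edge of `F` is contained in at least `t` hyperedges of `H`. -/
def HasHeavyCopy {V α : Type*} [DecidableEq V] (H : Finset (Finset V))
    (F : SimpleGraph α) (t : ℕ) : Prop :=
  ∃ i : α ↪ V, ∀ x y, F.Adj x y →
    t ≤ (H.filter (fun A => i x ∈ A ∧ i y ∈ A)).card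

/-- `H` contains a `t`-wise Berge copy of the graph `F`: an injective placement of `V(F)`
together with `t` hyperedges assigned to each edge of `F`, pairwise disjoint over distinct
edges, each containing both endpoints of its edge. -/
def HasBergeCopy {V α : Type*} (H : Finset (Finset V))
    (F : SimpleGraph α) (t : ℕ) : Prop :=
  ∃ (i : α ↪ V) (h : Sym2 α → Finset (Finset V)),
    (∀ e ∈ F.edgeSet, h e ⊆ H ∧ (h e).card = t ∧ ∀ A ∈ h e, ∀ x ∈ e, i x ∈ A) ∧
    ∀ e ∈ F.edgeSet, ∀ e' ∈ F.edgeSet, e ≠ e' → Disjoint (h e) (h e')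

/-- The Turán number of `t`-heavy copies of `F` for `r`-uniform hypergraphs on `n` vertices. -/
noncomputable def exHeavy {α : Type*} (n r t : ℕ) (F : SimpleGraph α) : ℕ :=
  sSup {m | ∃ H : Finset (Finset (Fin n)), (∀ A ∈ H, A.card = r) ∧
    ¬ HasHeavyCopy H F t ∧ H.card = m}

/-- The Turán number of `t`-wise Berge copies of `F` for `r`-uniform hypergraphs on `n` vertices. -/
noncomputable def exBerge {α : Type*} (n r t : ℕ) (F : SimpleGraph α) : ℕ :=
  sSup {m | ∃ H : Finset (Finset (Fin n)), (∀ A ∈ H, A.card = r) ∧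
    ¬ HasBergeCopy H F t ∧ H.card = m}

/-- `G` contains a copy of `F` as a subgraph. -/
def GraphContains {α β : Type*} (F : SimpleGraph α) (G : SimpleGraph β) : Prop :=
  ∃ f : α ↪ β, ∀ x y, F.Adj x y → G.Adj (f x) (f y)

/-- The number of `r`-cliques of `G`. -/
noncomputable def cliqueCount {β : Type*} [Fintype β] [DecidableEq β]
    (r : ℕ) (G : SimpleGraph β) : ℕ :=
  letI := Classical.decRel G.Adj
  (G.cliqueFinset r).card

/-- The number of edges of `G`. -/
noncomputable def edgeCount {β : Type*} [Fintype β] [DecidableEq β] (G : SimpleGraph β) : ℕ :=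
  letI := Classical.decRel G.Adj
  G.edgeFinset.card

/-- The generalized Turán number `ex(n, K_r, F)`. -/
noncomputable def exClique {α : Type*} (n r : ℕ) (F : SimpleGraph α) : ℕ :=
  sSup {m | ∃ G : SimpleGraph (Fin n), ¬ GraphContains F G ∧ cliqueCount r G = m}

/-- The Turán number `ex(n, F)`. -/
noncomputable def exTuran {α : Type*} (n : ℕ) (F : SimpleGraph α) : ℕ :=
  sSup {m | ∃ G : SimpleGraph (Fin n), ¬ GraphContains F G ∧ edgeCount G = m}


/-!
A `t`-heavy cherry is a vertex lying in two `t`-heavy pairs, so without one the heavy pairs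
form a matching: there are at most `n` of them (as ordered pairs), and each lies in at most `n`
triples. Every other pair lies in at most `t - 1` triples. Counting incidences between ordered
pairs and triples, each triple is counted six times, so `6 |H| ≤ n · n + n² (t - 1) = t n²`.
-/

open Finset SimpleGraph

section Codegree

variable {V : Type*} [DecidableEq V]

def codegree (H : Finset (Finset V)) (x y : V) : ℕ :=
  #{A ∈ H | x ∈ A ∧ y ∈ A}

lemma codegree_comm (H : Finset (Finset V)) (x y : V) : codegree H x y = codegree H y x := by
  simp only [codegree, and_comm]

lemma codegree_le_card_of_three [Fintype V] {H : Finset (Finset V)} (h3 : ∀ A ∈ H, #A = 3)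
    {x y : V} (hxy : x ≠ y) : codegree H x y ≤ Fintype.card V := by
  have hsub : {A ∈ H | x ∈ A ∧ y ∈ A} ⊆ univ.image (fun z => insert z {x, y}) := by
    intro A hA
    obtain ⟨hAH, hx, hy⟩ := mem_filter.mp hA
    have hxyA : {x, y} ⊆ A := insert_subset hx (singleton_subset_iff.mpr hy)
    obtain ⟨z, hz⟩ := card_eq_one.mp <| by
      rw [card_sdiff_of_subset hxyA, h3 A hAH, card_pair hxy]
    refine mem_image.mpr ⟨z, mem_univ z, ?_⟩
    rw [insert_eq, ← hz, sdiff_union_of_subset hxyA]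
  calc codegree H x y ≤ #(univ.image fun z => insert z {x, y}) := card_le_card hsub
    _ ≤ Fintype.card V := card_image_le

lemma sum_codegree_offDiag [Fintype V] (H : Finset (Finset V)) :
    ∑ p ∈ univ.offDiag, codegree H p.1 p.2 = ∑ A ∈ H, #A.offDiag := by
  simp only [codegree, card_filter]
  rw [sum_comm]
  refine sum_congr rfl fun A _ => ?_
  rw [sum_boole, Nat.cast_id]
  congr 1
  ext p
  simp only [mem_filter, mem_offDiag, mem_univ, true_and]
  tauto

lemma hasHeavyCopy_pathGraph_three {H : Finset (Finset V)} {t : ℕ} {x y z : V}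
    (hxy : x ≠ y) (hxz : x ≠ z) (hyz : y ≠ z)
    (hy : t ≤ codegree H x y) (hz : t ≤ codegree H x z) :
    HasHeavyCopy H (pathGraph 3) t := by
  have hinj : Function.Injective ![y, x, z] := by
    intro a b hab
    fin_cases a <;> fin_cases b <;> simp_all [eq_comm]
  refine ⟨⟨![y, x, z], hinj⟩, fun a b hab => ?_⟩
  rw [pathGraph_adj] at hab
  change t ≤ codegree H (![y, x, z] a) (![y, x, z] b)
  fin_cases a <;> fin_cases b <;> simp_all [codegree_comm H x]

def heavyPairs [Fintype V] (H : Finset (Finset V)) (t : ℕ) : Finset (V × V) :=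
  {p ∈ univ.offDiag | t ≤ codegree H p.1 p.2}

lemma card_heavyPairs_le [Fintype V] {H : Finset (Finset V)} {t : ℕ}
    (hno : ¬ HasHeavyCopy H (pathGraph 3) t) : #(heavyPairs H t) ≤ Fintype.card V := by
  refine card_le_card_of_injOn Prod.fst (fun _ _ => mem_univ _) fun p hp q hq hpq => ?_
  simp only [heavyPairs, coe_filter, mem_offDiag, mem_univ, true_and, Set.mem_ofPred_eq] at hp hq
  refine Prod.ext hpq (by_contra fun hne => hno ?_)
  exact hasHeavyCopy_pathGraph_three hp.1 (hpq ▸ hq.1) hne hp.2 (hpq ▸ hq.2)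

theorem six_mul_card_le_of_not_hasHeavyCopy_pathGraph_three [Fintype V]
    {H : Finset (Finset V)} {t : ℕ} (ht : 1 ≤ t) (h3 : ∀ A ∈ H, #A = 3)
    (hno : ¬ HasHeavyCopy H (pathGraph 3) t) : 6 * #H ≤ t * Fintype.card V ^ 2 := by
  set n := Fintype.card V
  have hpair : ∀ p ∈ (univ : Finset V).offDiag,
      codegree H p.1 p.2 ≤ (t - 1) + if t ≤ codegree H p.1 p.2 then n else 0 := by
    intro p hp
    split_ifs with hheavy
    · have := codegree_le_card_of_three h3 (mem_offDiag.mp hp).2.2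
      omega
    · omega
  have hoff : #(univ : Finset V).offDiag ≤ n * n := by
    rw [offDiag_card, card_univ]
    exact Nat.sub_le _ _
  calc 6 * #H = ∑ A ∈ H, #A.offDiag := by
        rw [sum_congr rfl fun A hA => by rw [offDiag_card, h3 A hA], sum_const, smul_eq_mul,
          mul_comm]
    _ = ∑ p ∈ univ.offDiag, codegree H p.1 p.2 := (sum_codegree_offDiag H).symm
    _ ≤ ∑ p ∈ univ.offDiag, ((t - 1) + if t ≤ codegree H p.1 p.2 then n else 0) :=
        sum_le_sum hpair
    _ = #(univ : Finset V).offDiag * (t - 1) + #(heavyPairs H t) * n := by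
        rw [sum_add_distrib, ← sum_filter, sum_const, sum_const, smul_eq_mul, smul_eq_mul]
        rfl
    _ ≤ n * n * (t - 1) + n * n := by gcongr; exact card_heavyPairs_le hno
    _ = t * n ^ 2 := by
        obtain ⟨s, rfl⟩ := Nat.exists_eq_add_of_le' ht
        simp only [Nat.add_sub_cancel]
        ring

end Codegree

theorem six_mul_exHeavy_pathGraph_three_le (n : ℕ) {t : ℕ} (ht : 1 ≤ t) :
    6 * exHeavy n 3 t (pathGraph 3) ≤ t * n ^ 2 := by
  rw [mul_comm, ← Nat.le_div_iff_mul_le (by norm_num)]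
  refine csSup_le' ?_
  rintro _ ⟨H, h3, hno, rfl⟩
  rw [Nat.le_div_iff_mul_le (by norm_num), mul_comm]
  simpa using six_mul_card_le_of_not_hasHeavyCopy_pathGraph_three ht h3 hno

theorem exHeavy_cherry_upper (t : ℕ) (ht : 3 ≤ t) :
    ∀ ε : ℝ, 0 < ε → ∃ N : ℕ, ∀ n ≥ N,
      (exHeavy n 3 t (SimpleGraph.pathGraph 3) : ℝ) ≤
        ((t : ℝ) / 6 + ε) * (n : ℝ) ^ 2 := by
  intro ε hε
  refine ⟨0, fun n _ => ?_⟩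
  have hex : (6 : ℝ) * exHeavy n 3 t (pathGraph 3) ≤ t * n ^ 2 := by
    exact_mod_cast six_mul_exHeavy_pathGraph_three_le n (by omega : 1 ≤ t)
  nlinarith [mul_nonneg hε.le (sq_nonneg (n : ℝ))]
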